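/- arXiv:2501.00427 — 2 statements merged into one kernel-verified Lean document; each statement's English description precedes it below -/
import Mathlib

section
/- Let ν ∈ (0,1], ρ ≥ 0, let S ⊆ ℝⁿ be a nonempty convex set, and let h : ℝⁿ → ℝ. Suppose that for every x ∈ S there exists a vector ζ ∈ ℝⁿ such that h(y) ≥ h(x) + ⟨ζ, y−x⟩ − ρ‖y−x‖^{ν+1} for all y ∈ S. Then h is ν-paraconvex on S with constant 2ρ, i.e., h(λx+(1−λ)y) ≤ λh(x) + (1−λ)h(y) + 2ρ·min{λ,1−λ}·‖x−y‖^{ν+1} for all x, y ∈ S and λ ∈ [0,1]. -/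
/-!
Fix `x, y ∈ S`, `t ∈ [0,1]` and let `z = t x + (1-t) y`, which lies in `S`. Averaging the lower
models at `z` evaluated at `x` and `y` with weights `t` and `1-t` cancels the linear terms, since
`t (x - z) + (1-t) (y - z) = 0`. The remaining error is
`ρ (t (1-t)^(ν+1) + (1-t) t^(ν+1)) ‖x - y‖^(ν+1)`, and each of the two products is at most
`min t (1-t)`.
-/

open scoped RealInnerProductSpace

def ParaconvexOn {E : Type*} [NormedAddCommGroup E] [Module ℝ E]
    (ν ρ : ℝ) (S : Set E) (h : E → ℝ) : Prop :=
  ∀ x ∈ S, ∀ y ∈ S, ∀ t ∈ Set.Icc (0 : ℝ) 1,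
    h (t • x + (1 - t) • y) ≤ t * h x + (1 - t) * h y + ρ * min t (1 - t) * ‖x - y‖ ^ (ν + 1)

lemma Real.mul_rpow_le_min {a b p : ℝ} (ha₀ : 0 ≤ a) (ha₁ : a ≤ 1) (hb₀ : 0 ≤ b) (hb₁ : b ≤ 1)
    (hp : 1 ≤ p) : a * b ^ p ≤ min a b :=
  le_min (mul_le_of_le_one_right ha₀ (Real.rpow_le_one hb₀ hb₁ (by linarith)))
    ((mul_le_of_le_one_left (Real.rpow_nonneg hb₀ p) ha₁).trans
      (Real.rpow_le_self_of_le_one hb₀ hb₁ hp))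

section ConvexCombination

variable {E : Type*} [NormedAddCommGroup E] [NormedSpace ℝ E]

lemma norm_sub_convexCombination_left (x y : E) {t : ℝ} (ht : t ≤ 1) :
    ‖x - (t • x + (1 - t) • y)‖ = (1 - t) * ‖x - y‖ := by
  rw [show x - (t • x + (1 - t) • y) = (1 - t) • (x - y) by module, norm_smul,
    Real.norm_of_nonneg (by linarith)]

lemma norm_sub_convexCombination_right (x y : E) {t : ℝ} (ht : 0 ≤ t) :
    ‖y - (t • x + (1 - t) • y)‖ = t * ‖x - y‖ := by
  rw [show y - (t • x + (1 - t) • y) = (-t) • (x - y) by module, norm_smul, norm_neg,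
    Real.norm_of_nonneg ht]

end ConvexCombination

lemma inner_sub_convexCombination_add {E : Type*} [NormedAddCommGroup E] [InnerProductSpace ℝ E]
    (ζ x y : E) (t : ℝ) :
    t * ⟪ζ, x - (t • x + (1 - t) • y)⟫ + (1 - t) * ⟪ζ, y - (t • x + (1 - t) • y)⟫ = 0 := by
  rw [← real_inner_smul_right, ← real_inner_smul_right, ← inner_add_right,
    show t • (x - (t • x + (1 - t) • y)) + (1 - t) • (y - (t • x + (1 - t) • y)) = 0 by module,
    inner_zero_right]

lemma paraconvexOn_two_mul_of_subgradient_ineq {E : Type*} [NormedAddCommGroup E]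
    [InnerProductSpace ℝ E] {ν ρ : ℝ} (hν : 0 ≤ ν) (hρ : 0 ≤ ρ) {S : Set E} (hS : Convex ℝ S)
    {h : E → ℝ}
    (hsub : ∀ x ∈ S, ∃ ζ : E, ∀ y ∈ S, h x + ⟪ζ, y - x⟫ - ρ * ‖y - x‖ ^ (ν + 1) ≤ h y) :
    ParaconvexOn ν (2 * ρ) S h := by
  rintro x hx y hy t ⟨ht₀, ht₁⟩
  have hs₀ : 0 ≤ 1 - t := by linarith
  have hs₁ : 1 - t ≤ 1 := by linarith
  have hp : 1 ≤ ν + 1 := by linarith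
  set z := t • x + (1 - t) • y
  obtain ⟨ζ, hζ⟩ := hsub z (hS hx hy ht₀ hs₀ (by ring))
  have hxz : ‖x - z‖ = (1 - t) * ‖x - y‖ := norm_sub_convexCombination_left x y ht₁
  have hyz : ‖y - z‖ = t * ‖x - y‖ := norm_sub_convexCombination_right x y ht₀
  set N := ‖x - y‖ ^ (ν + 1)
  have hN : 0 ≤ N := Real.rpow_nonneg (norm_nonneg _) _
  have hx' : h z + ⟪ζ, x - z⟫ - ρ * ((1 - t) ^ (ν + 1) * N) ≤ h x := by
    rw [← Real.mul_rpow hs₀ (norm_nonneg _), ← hxz]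
    exact hζ x hx
  have hy' : h z + ⟪ζ, y - z⟫ - ρ * (t ^ (ν + 1) * N) ≤ h y := by
    rw [← Real.mul_rpow ht₀ (norm_nonneg _), ← hyz]
    exact hζ y hy
  have hcancel := inner_sub_convexCombination_add ζ x y t
  have herror : t * (1 - t) ^ (ν + 1) + (1 - t) * t ^ (ν + 1) ≤ 2 * min t (1 - t) := by
    have h₁ := Real.mul_rpow_le_min ht₀ ht₁ hs₀ hs₁ hp
    have h₂ := Real.mul_rpow_le_min hs₀ hs₁ ht₀ ht₁ hp
    rw [min_comm] at h₂
    linarith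
  linarith [mul_le_mul_of_nonneg_left hx' ht₀, mul_le_mul_of_nonneg_left hy' hs₀,
    mul_le_mul_of_nonneg_right herror (mul_nonneg hρ hN)]

theorem paraconvex_of_subgradient_ineq_general {n : ℕ} (ν ρ : ℝ)
    (hν : ν ∈ Set.Ioc (0 : ℝ) 1) (hρ : 0 ≤ ρ)
    (S : Set (EuclideanSpace ℝ (Fin n))) (hScv : Convex ℝ S)
    (h : EuclideanSpace ℝ (Fin n) → ℝ)
    (hsub : ∀ x ∈ S, ∃ ζ : EuclideanSpace ℝ (Fin n),
        ∀ y ∈ S, h x + ⟪ζ, y - x⟫ - ρ * ‖y - x‖ ^ (ν + 1) ≤ h y) :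
    ∀ x ∈ S, ∀ y ∈ S, ∀ t ∈ Set.Icc (0 : ℝ) 1,
      h (t • x + (1 - t) • y) ≤
        t * h x + (1 - t) * h y + 2 * ρ * min t (1 - t) * ‖x - y‖ ^ (ν + 1) :=
  paraconvexOn_two_mul_of_subgradient_ineq hν.1.le hρ hScv hsub

/-- If at every `x ∈ S` there is `ζ` with
`h y ≥ h x + ⟪ζ, y - x⟫ - ρ‖y - x‖^(ν+1)` for all `y ∈ S`, then `h` is `ν`-paraconvex
on `S` with constant `2ρ`. -/
theorem paraconvex_of_subgradient_ineq {n : ℕ} (ν ρ : ℝ)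
    (hν : ν ∈ Set.Ioc (0 : ℝ) 1) (hρ : 0 ≤ ρ)
    (S : Set (EuclideanSpace ℝ (Fin n))) (hSne : S.Nonempty) (hScv : Convex ℝ S)
    (h : EuclideanSpace ℝ (Fin n) → ℝ)
    (hsub : ∀ x ∈ S, ∃ ζ : EuclideanSpace ℝ (Fin n),
        ∀ y ∈ S, h x + ⟪ζ, y - x⟫ - ρ * ‖y - x‖ ^ (ν + 1) ≤ h y) :
    ∀ x ∈ S, ∀ y ∈ S, ∀ t ∈ Set.Icc (0 : ℝ) 1,
      h (t • x + (1 - t) • y) ≤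
        t * h x + (1 - t) * h y + 2 * ρ * min t (1 - t) * ‖x - y‖ ^ (ν + 1) :=
  paraconvex_of_subgradient_ineq_general ν ρ hν hρ S hScv h hsub
end

section
/- In the Setting, let τ := μ/L and fix a constant step-size α with 0 < α < min{1, min{1,τ}·(μ/(2ρ))^{δ/(δ(1+ν)−1)}}. Let (x_k)_{k≥1} be generated by the projected subgradient iteration with α_k = α and x_1 ∈ T_{1/2}. Then for every k ≥ (1/α²)·(μ/(2ρ))^{2δ/(δ(1+ν)−1)}, one has 0 ≤ f_k* − f* ≤ 2Lα, where f_k* := min{f(x_i) : i = 1, …, k}. -/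
open scoped RealInnerProductSpace

lemma proj_contract' {F : Type*} [NormedAddCommGroup F] [InnerProductSpace ℝ F]
    {K : Set F} (h : Convex ℝ K) {p z w : F} (hp : p ∈ K) (hw : w ∈ K)
    (hmin : ∀ y ∈ K, dist p z ≤ dist y z) : ‖p - w‖ ≤ ‖z - w‖ := by
  haveI : Nonempty K := ⟨⟨p, hp⟩⟩
  have hinf : ‖z - p‖ = ⨅ y : K, ‖z - y‖ := by
    apply le_antisymm
    · apply le_ciInf
      intro y
      have := hmin y y.2
      simpa [dist_eq_norm, norm_sub_rev] using this
    · exact ciInf_le ⟨0, fun _ ⟨_, h⟩ => h ▸ norm_nonneg _⟩ (⟨p, hp⟩ : K)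
  have key : ⟪z - p, w - p⟫ ≤ 0 :=
    (norm_eq_iInf_iff_real_inner_le_zero h hp).mp hinf w hw
  have hkey : ‖p - w‖ ^ 2 ≤ ‖z - w‖ ^ 2 := by
    have hz : z - w = (z - p) + (p - w) := by abel
    rw [hz, norm_add_sq_real]
    have hin : ⟪z - p, p - w⟫ = - ⟪z - p, w - p⟫ := by
      rw [← inner_neg_right]; congr 1; abel
    nlinarith [sq_nonneg ‖z - p‖]
  exact (pow_le_pow_iff_left₀ (norm_nonneg _) (norm_nonneg _) two_ne_zero).mp hkey

/-- **Convergence rate of the constant step-size method.** With constant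
step-size `0 < α < min{1, min{1,τ}(μ/(2ρ))^{δ/(δ(1+ν)−1)}}` and `x_1 ∈ T_{1/2}`,
`0 ≤ f_k* − f* ≤ 2Lα` for all `k ≥ (1/α²)(μ/(2ρ))^{2δ/(δ(1+ν)−1)}`. -/
theorem constant_stepsize_rate {n : ℕ}
    (X : Set (EuclideanSpace ℝ (Fin n))) (hXne : X.Nonempty)
    (hXcl : IsClosed X) (hXcv : Convex ℝ X)
    (f : EuclideanSpace ℝ (Fin n) → ℝ) (hf : Continuous f)
    (fstar : ℝ) (Xstar : Set (EuclideanSpace ℝ (Fin n)))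
    (hXstar : Xstar = {x ∈ X | f x = fstar}) (hXstarne : Xstar.Nonempty)
    (hfstar : ∀ x ∈ X, fstar ≤ f x)
    (ρ ν δ μ : ℝ) (hρ : 0 < ρ) (hν : ν ∈ Set.Ioc (0 : ℝ) 1)
    (hδ : δ ∈ Set.Ioc (1 / (1 + ν)) 1) (hμ : 0 < μ)
    (hHEB : ∀ x ∈ X, μ * Metric.infDist x Xstar ^ (1 / δ) ≤ f x - fstar)
    (L : ℝ) (hL : 0 < L) (τ : ℝ) (hτ : τ = μ / L)
    (α : ℝ) (hα0 : 0 < α)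
    (hαlt : α < min 1 (min 1 τ * (μ / (2 * ρ)) ^ (δ / (δ * (1 + ν) - 1))))
    (x ζ : ℕ → EuclideanSpace ℝ (Fin n))
    (hx1 : x 1 ∈ X ∧ Metric.infDist (x 1) Xstar <
        ((1 / 2) * μ / ρ) ^ (δ / (δ * (1 + ν) - 1)))
    (hζsub : ∀ k, 1 ≤ k → ∀ y ∈ X,
        f (x k) + ⟪ζ k, y - x k⟫ - ρ * ‖y - x k‖ ^ (1 + ν) ≤ f y)
    (hζL : ∀ k, ‖ζ k‖ ≤ L)
    (hupd : ∀ k, 1 ≤ k → (ζ k = 0 → x (k + 1) = x k) ∧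
        (ζ k ≠ 0 → x (k + 1) ∈ X ∧ ∀ y ∈ X,
          dist (x (k + 1)) (x k - (α / ‖ζ k‖) • ζ k) ≤
            dist y (x k - (α / ‖ζ k‖) • ζ k))) :
    ∀ k : ℕ, ∀ hk : 1 ≤ k,
      (1 / α ^ 2) * (μ / (2 * ρ)) ^ (2 * δ / (δ * (1 + ν) - 1)) ≤ (k : ℝ) →
      0 ≤ (Finset.Icc 1 k).inf' (Finset.nonempty_Icc.mpr hk) (fun i => f (x i)) - fstar ∧
      (Finset.Icc 1 k).inf' (Finset.nonempty_Icc.mpr hk) (fun i => f (x i)) - fstar ≤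
        2 * L * α := by
  intro k hk hkbig
  obtain ⟨hν0, hν1⟩ := hν
  obtain ⟨hδl, hδu⟩ := hδ
  have h1ν : (0 : ℝ) < 1 + ν := by linarith
  have hδ0 : 0 < δ := lt_trans (by positivity) hδl
  have hβ : 0 < δ * (1 + ν) - 1 := by
    have := (div_lt_iff₀ h1ν).mp hδl
    nlinarith
  have hbase : (0 : ℝ) < μ / (2 * ρ) := by positivity
  set Θ : ℝ := (μ / (2 * ρ)) ^ (δ / (δ * (1 + ν) - 1)) with hΘdef
  have hΘpos : 0 < Θ := Real.rpow_pos_of_pos hbase _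
  -- Xstar facts
  have hXsub : Xstar ⊆ X := by rw [hXstar]; exact fun y hy => hy.1
  have hXscl : IsClosed Xstar := by
    have : Xstar = X ∩ f ⁻¹' {fstar} := by
      rw [hXstar]; ext y
      simp only [Set.mem_setOf_eq, Set.mem_inter_iff, Set.mem_preimage, Set.mem_singleton_iff]
    rw [this]
    exact hXcl.inter (isClosed_singleton.preimage hf)
  -- iterates stay in X
  have hmem : ∀ i, 1 ≤ i → x i ∈ X := by
    intro i hi
    induction i with
    | zero => omega
    | succ m ih =>
      rcases Nat.eq_or_lt_of_le hi with h1 | h1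
      · rw [← h1]; exact hx1.1
      · have hm : 1 ≤ m := by omega
        by_cases hz : ζ m = 0
        · rw [(hupd m hm).1 hz]; exact ih hm
        · exact ((hupd m hm).2 hz).1
  refine ⟨?_, ?_⟩
  · have h0 : fstar ≤ (Finset.Icc 1 k).inf' (Finset.nonempty_Icc.mpr hk) (fun i => f (x i)) := by
      apply Finset.le_inf'
      intro i hi
      exact hfstar _ (hmem i (Finset.mem_Icc.mp hi).1)
    linarith
  · by_contra hcon
    push_neg at hcon
    have hall : ∀ i ∈ Finset.Icc 1 k, 2 * L * α < f (x i) - fstar := by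
      intro i hi
      have := Finset.inf'_le (fun i => f (x i)) hi
      calc 2 * L * α < _ - fstar := hcon
        _ ≤ f (x i) - fstar := by exact sub_le_sub_right this fstar
    -- one-step decrease
    have step : ∀ i, 1 ≤ i → x i ∈ X → Metric.infDist (x i) Xstar < Θ →
        2 * L * α < f (x i) - fstar →
        x (i + 1) ∈ X ∧
        Metric.infDist (x (i + 1)) Xstar ^ 2 ≤ Metric.infDist (x i) Xstar ^ 2 - α ^ 2 := by
      intro i hi1 hxX hdΘ hgap
      obtain ⟨w, hwXs, hww⟩ := hXscl.exists_infDist_eq_dist hXstarne (x i)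
      set d : ℝ := Metric.infDist (x i) Xstar with hddef
      have hd0 : 0 ≤ d := Metric.infDist_nonneg
      have hwX : w ∈ X := hXsub hwXs
      have hfw : f w = fstar := by
        rw [hXstar] at hwXs; exact hwXs.2
      have hdist : ‖x i - w‖ = d := by rw [hww, dist_eq_norm]
      -- subgradient inequality at w
      have hsub := hζsub i hi1 w hwX
      have hwn : ‖w - x i‖ = d := by rw [norm_sub_rev, hdist]
      have hinner0 : ⟪ζ i, w - x i⟫ = - ⟪ζ i, x i - w⟫ := by
        rw [← inner_neg_right]; congr 1; abel
      have hsub2 : f (x i) - fstar - ρ * d ^ (1 + ν) ≤ ⟪ζ i, x i - w⟫ := by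
        rw [hwn, hfw] at hsub
        rw [hinner0] at hsub
        linarith
      -- tube bound: ρ d^{1+ν} ≤ (1/2)(f x_i − fstar)
      have hgap0 : 0 < f (x i) - fstar := by
        have : 0 < 2 * L * α := by positivity
        linarith
      have htube : ρ * d ^ (1 + ν) ≤ (1 / 2) * (f (x i) - fstar) := by
        rcases eq_or_lt_of_le hd0 with hdz | hdp
        · rw [← hdz, Real.zero_rpow (by positivity : (1:ℝ) + ν ≠ 0)]
          linarith
        · have hsplit : d ^ (1 + ν) = d ^ ((δ * (1 + ν) - 1) / δ) * d ^ (1 / δ) := by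
            rw [← Real.rpow_add hdp]
            congr 1
            field_simp; ring

          have hlt : d ^ ((δ * (1 + ν) - 1) / δ) < μ / (2 * ρ) := by
            have h1 : d ^ ((δ * (1 + ν) - 1) / δ) < Θ ^ ((δ * (1 + ν) - 1) / δ) :=
              Real.rpow_lt_rpow hd0 hdΘ (by positivity)
            have h2 : Θ ^ ((δ * (1 + ν) - 1) / δ) = μ / (2 * ρ) := by
              rw [hΘdef, ← Real.rpow_mul (le_of_lt hbase),
                show δ / (δ * (1 + ν) - 1) * ((δ * (1 + ν) - 1) / δ) = 1 by field_simp,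
                Real.rpow_one]
            rw [h2] at h1
            exact h1
          have hheb := hHEB (x i) hxX
          have hdp1 : 0 < d ^ (1 / δ) := Real.rpow_pos_of_pos hdp _
          calc ρ * d ^ (1 + ν) = (ρ * d ^ ((δ * (1 + ν) - 1) / δ)) * d ^ (1 / δ) := by
                rw [hsplit]; ring
            _ ≤ (ρ * (μ / (2 * ρ))) * d ^ (1 / δ) := by
                apply mul_le_mul_of_nonneg_right _ (le_of_lt hdp1)
                exact mul_le_mul_of_nonneg_left (le_of_lt hlt) (le_of_lt hρ)
            _ = (1 / 2) * (μ * d ^ (1 / δ)) := by field_simp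
            _ ≤ (1 / 2) * (f (x i) - fstar) := by linarith
      have hinner : L * α < ⟪ζ i, x i - w⟫ := by
        calc L * α < (1 / 2) * (f (x i) - fstar) := by linarith
          _ ≤ ⟪ζ i, x i - w⟫ := by linarith
      have hζne : ζ i ≠ 0 := by
        intro h
        rw [h, inner_zero_left] at hinner
        nlinarith
      have hζpos : 0 < ‖ζ i‖ := norm_pos_iff.mpr hζne
      obtain ⟨hx1X, hproj⟩ := (hupd i hi1).2 hζne
      set c : ℝ := α / ‖ζ i‖ with hcdef
      have hcpos : 0 < c := by positivity
      set z : EuclideanSpace ℝ (Fin n) := x i - c • ζ i with hzdef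
      have hcontr : ‖x (i + 1) - w‖ ≤ ‖z - w‖ := proj_contract' hXcv hx1X hwX hproj
      have hzw : ‖z - w‖ ^ 2 ≤ d ^ 2 - α ^ 2 := by
        have hrw : z - w = (x i - w) - c • ζ i := by rw [hzdef]; abel
        rw [hrw, norm_sub_sq_real]
        have h1 : ‖c • ζ i‖ ^ 2 = α ^ 2 := by
          rw [norm_smul, Real.norm_eq_abs, abs_of_pos hcpos, mul_pow, hcdef]
          field_simp
        have h2 : ⟪x i - w, c • ζ i⟫ = c * ⟪ζ i, x i - w⟫ := by
          rw [real_inner_smul_right, real_inner_comm]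
        rw [h1, h2, hdist]
        have h3 : α ^ 2 ≤ c * (L * α) := by
          have : c * (L * α) ≥ c * (‖ζ i‖ * α) := by
            apply mul_le_mul_of_nonneg_left _ (le_of_lt hcpos)
            exact mul_le_mul_of_nonneg_right (hζL i) (le_of_lt hα0)
          have hce : c * (‖ζ i‖ * α) = α ^ 2 := by
            rw [hcdef]; field_simp
          linarith
        have h4 : c * (L * α) ≤ c * ⟪ζ i, x i - w⟫ :=
          mul_le_mul_of_nonneg_left (le_of_lt hinner) (le_of_lt hcpos)
        linarith
      refine ⟨hx1X, ?_⟩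
      have h5 : Metric.infDist (x (i + 1)) Xstar ≤ ‖x (i + 1) - w‖ := by
        rw [← dist_eq_norm]
        exact Metric.infDist_le_dist_of_mem hwXs
      have h6 : Metric.infDist (x (i + 1)) Xstar ^ 2 ≤ ‖z - w‖ ^ 2 := by
        apply pow_le_pow_left₀ Metric.infDist_nonneg (le_trans h5 hcontr)
      linarith
    -- main induction
    set d1 : ℝ := Metric.infDist (x 1) Xstar with hd1def
    have hd1Θ : d1 < Θ := by
      have : (1 / 2 : ℝ) * μ / ρ = μ / (2 * ρ) := by ring
      rw [hd1def, hΘdef, ← this]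
      exact hx1.2
    have main : ∀ j, j ≤ k → x (1 + j) ∈ X ∧
        Metric.infDist (x (1 + j)) Xstar ^ 2 + j * α ^ 2 ≤ d1 ^ 2 := by
      intro j
      induction j with
      | zero => intro _; simp; exact ⟨hx1.1, le_refl _⟩
      | succ m ih =>
        intro hmk
        obtain ⟨hmX, hmd⟩ := ih (by omega)
        have hmd2 : Metric.infDist (x (1 + m)) Xstar < Θ := by
          have hm0 : (0:ℝ) ≤ (m : ℝ) * α ^ 2 :=
            mul_nonneg (Nat.cast_nonneg m) (sq_nonneg α)
          have h1 : Metric.infDist (x (1 + m)) Xstar ^ 2 ≤ d1 ^ 2 := by linarith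
          have h2 : Metric.infDist (x (1 + m)) Xstar ^ 2 < Θ ^ 2 := by
            have := pow_lt_pow_left₀ hd1Θ Metric.infDist_nonneg two_ne_zero
            linarith
          exact lt_of_pow_lt_pow_left₀ 2 (le_of_lt hΘpos) h2
        have hgap : 2 * L * α < f (x (1 + m)) - fstar :=
          hall (1 + m) (Finset.mem_Icc.mpr ⟨by omega, by omega⟩)
        obtain ⟨hX', hdec⟩ := step (1 + m) (by omega) hmX hmd2 hgap
        constructor
        · have : 1 + (m + 1) = (1 + m) + 1 := by omega
          rw [this]; exact hX'
        · have heq : 1 + (m + 1) = (1 + m) + 1 := by omega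
          rw [heq]
          push_cast
          linarith
    -- conclude contradiction
    obtain ⟨-, hfin⟩ := main k le_rfl
    have hΘ2 : Θ ^ 2 = (μ / (2 * ρ)) ^ (2 * δ / (δ * (1 + ν) - 1)) := by
      rw [hΘdef, ← Real.rpow_natCast ((μ / (2 * ρ)) ^ (δ / (δ * (1 + ν) - 1))) 2,
        ← Real.rpow_mul (le_of_lt hbase)]
      congr 1
      push_cast
      ring
    have hkα : Θ ^ 2 ≤ (k : ℝ) * α ^ 2 := by
      have hα2 : 0 < α ^ 2 := by positivity
      rw [hΘ2]
      calc (μ / (2 * ρ)) ^ (2 * δ / (δ * (1 + ν) - 1))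
          = ((1 / α ^ 2) * (μ / (2 * ρ)) ^ (2 * δ / (δ * (1 + ν) - 1))) * α ^ 2 := by
            have hne : α ^ 2 ≠ 0 := by positivity
            rw [mul_right_comm, one_div, inv_mul_cancel₀ hne, one_mul]
        _ ≤ (k : ℝ) * α ^ 2 := mul_le_mul_of_nonneg_right hkbig (le_of_lt hα2)
    have hd12 : d1 ^ 2 < Θ ^ 2 := pow_lt_pow_left₀ hd1Θ Metric.infDist_nonneg two_ne_zero
    have hnn : 0 ≤ Metric.infDist (x (1 + k)) Xstar ^ 2 :=
      sq_nonneg _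
    linarith
end
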